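/- Let f : ℝⁿ × ℝᵐ → ℝⁿ and φ : ℝⁿ × ℝᵐ → ℝᵐ be twice continuously differentiable, and fix q₀ ∈ ℝⁿ and p₀ ∈ ℝⁿ. Define Ψ : ℝᵐ × ℝᵐ → ℝᵐ × ℝᵐ by Ψ(u,λ) = ( φ(q₀,u), D_uf(q₀,u)ᵀ p₀ + D_uφ(q₀,u)ᵀ λ ). If the matrix D_uφ(q₀,u₀) is invertible, then for every λ₀ ∈ ℝᵐ the Fréchet derivative DΨ(u₀,λ₀) is a linear isomorphism of ℝᵐ × ℝᵐ. (Consequently, if the semi-explicit DAE q̇ = f(q,u), 0 = φ(q,u) has index 1, then its adjoint DAE system has index 1 with dynamical variables (q,p) and algebraic variables (u,λ).) -/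

import Mathlib

/-! At `(u₀, λ₀)` the derivative of `Ψ` is block lower triangular,
`(x, y) ↦ (A x, C x + Aᵀ y)` with `A = D_uφ(q₀,u₀)`; the second-order terms of `f` and `φ`
only enter the off-diagonal block `C`. So it is bijective as soon as `A` and `Aᵀ` are, and
`Aᵀ` is invertible because it is the star of the unit `A` in the C⋆-algebra of operators. -/

open scoped RealInnerProductSpace

noncomputable section

abbrev Euc (n : ℕ) : Type := EuclideanSpace ℝ (Fin n)

/-- Partial Jacobian `D_qF(q,u)` with respect to the first argument. -/
noncomputable def Dq {n m k : ℕ} (F : Euc n × Euc m → Euc k) (q : Euc n) (u : Euc m) :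
    Euc n →L[ℝ] Euc k :=
  fderiv ℝ (fun q' => F (q', u)) q

/-- Partial Jacobian `D_uF(q,u)` with respect to the second argument. -/
noncomputable def Du {n m k : ℕ} (F : Euc n × Euc m → Euc k) (q : Euc n) (u : Euc m) :
    Euc m →L[ℝ] Euc k :=
  fderiv ℝ (fun u' => F (q, u')) u

/-- `D_qF(q,u)ᵀ`, the transpose (adjoint) of the partial Jacobian in `q`. -/
noncomputable def DqT {n m k : ℕ} (F : Euc n × Euc m → Euc k) (q : Euc n) (u : Euc m) :
    Euc k →L[ℝ] Euc n :=
  ContinuousLinearMap.adjoint (Dq F q u)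

/-- `D_uF(q,u)ᵀ`, the transpose (adjoint) of the partial Jacobian in `u`. -/
noncomputable def DuT {n m k : ℕ} (F : Euc n × Euc m → Euc k) (q : Euc n) (u : Euc m) :
    Euc k →L[ℝ] Euc m :=
  ContinuousLinearMap.adjoint (Du F q u)

/-- Partial gradient `∇_qL(q,u)`. -/
noncomputable def gradQ {n m : ℕ} (L : Euc n × Euc m → ℝ) (q : Euc n) (u : Euc m) : Euc n :=
  gradient (fun q' => L (q', u)) q

/-- Partial gradient `∇_uL(q,u)`. -/
noncomputable def gradU {n m : ℕ} (L : Euc n × Euc m → ℝ) (q : Euc n) (u : Euc m) : Euc m :=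
  gradient (fun u' => L (q, u')) u

theorem Function.Bijective.prod_lowerTriangular {α β γ δ : Type*} [AddGroup δ]
    {A : α → γ} {B : β → δ} (hA : Function.Bijective A) (hB : Function.Bijective B)
    (C : α → δ) : Function.Bijective fun p : α × β => (A p.1, C p.1 + B p.2) := by
  refine ⟨fun p p' h => ?_, fun z => ?_⟩
  · simp only [Prod.mk.injEq] at h
    have h₁ : p.1 = p'.1 := hA.1 h.1
    rw [h₁, add_right_inj] at h
    exact Prod.ext h₁ (hB.1 h.2)
  · obtain ⟨x, hx⟩ := hA.2 z.1
    obtain ⟨y, hy⟩ := hB.2 (-C x + z.2)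
    exact ⟨(x, y), Prod.ext hx (by simp [hy])⟩

namespace ContinuousLinearMap

theorem bijective_adjoint_iff {𝕜 E : Type*} [RCLike 𝕜] [NormedAddCommGroup E]
    [InnerProductSpace 𝕜 E] [CompleteSpace E] (A : E →L[𝕜] E) :
    Function.Bijective (adjoint A) ↔ Function.Bijective A := by
  rw [← isUnit_iff_bijective, ← isUnit_iff_bijective, ← star_eq_adjoint, isUnit_star]

theorem isBoundedLinearMap_adjoint {E F : Type*} [NormedAddCommGroup E] [InnerProductSpace ℝ E]
    [CompleteSpace E] [NormedAddCommGroup F] [InnerProductSpace ℝ F] [CompleteSpace F] :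
    IsBoundedLinearMap ℝ (adjoint : (E →L[ℝ] F) → F →L[ℝ] E) where
  map_add := map_add adjoint
  map_smul c A := by simp
  bound := ⟨1, one_pos, fun A => by simp⟩

end ContinuousLinearMap

theorem fderiv_prodMk_add_clm_apply {𝕜 E F G H : Type*} [NontriviallyNormedField 𝕜]
    [NormedAddCommGroup E] [NormedSpace 𝕜 E] [NormedAddCommGroup F] [NormedSpace 𝕜 F]
    [NormedAddCommGroup G] [NormedSpace 𝕜 G] [NormedAddCommGroup H] [NormedSpace 𝕜 H]
    {g : E → G} {h : E → H} {K : E → F →L[𝕜] H} {u₀ : E}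
    (hg : DifferentiableAt 𝕜 g u₀) (hh : DifferentiableAt 𝕜 h u₀)
    (hK : DifferentiableAt 𝕜 K u₀) (l₀ : F) :
    ⇑(fderiv 𝕜 (fun w : E × F => (g w.1, h w.1 + K w.1 w.2)) (u₀, l₀)) =
      fun v => (fderiv 𝕜 g u₀ v.1, fderiv 𝕜 (fun u => h u + K u l₀) u₀ v.1 + K u₀ v.2) := by
  have hfst := hasFDerivAt_fst (𝕜 := 𝕜) (p := (u₀, l₀))
  have hΨ : HasFDerivAt (fun w : E × F => (g w.1, h w.1 + K w.1 w.2)) _ (u₀, l₀) :=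
    (hg.hasFDerivAt.comp _ hfst).prodMk
      ((hh.hasFDerivAt.comp _ hfst).add ((hK.hasFDerivAt.comp _ hfst).clm_apply hasFDerivAt_snd))
  have hslice : HasFDerivAt (fun u => h u + K u l₀) _ u₀ :=
    hh.hasFDerivAt.add (hK.hasFDerivAt.clm_apply (hasFDerivAt_const l₀ u₀))
  ext1 v
  rw [hΨ.fderiv, hslice.fderiv]
  simp only [ContinuousLinearMap.prod_apply, ContinuousLinearMap.comp_apply, add_apply,
    zero_apply, map_zero, zero_add, ContinuousLinearMap.flip_apply,
    ContinuousLinearMap.coe_fst', ContinuousLinearMap.coe_snd']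
  rw [add_assoc, add_comm (K u₀ v.2)]

theorem differentiable_DuT {n m k : ℕ} {F : Euc n × Euc m → Euc k} (hF : ContDiff ℝ 2 F)
    (q : Euc n) : Differentiable ℝ (DuT F q) := by
  have hslice : ContDiff ℝ 2 fun u : Euc m => F (q, u) :=
    hF.comp (contDiff_const.prodMk contDiff_id)
  exact (ContinuousLinearMap.isBoundedLinearMap_adjoint.contDiff.comp
    (hslice.fderiv_right (m := 1) le_rfl)).differentiable one_ne_zero

/-- if `D_uφ(q₀,u₀)` is invertible (index 1), then the derivative of the
constraint map `Ψ(u,λ) = (φ(q₀,u), D_uf(q₀,u)ᵀ p₀ + D_uφ(q₀,u)ᵀ λ)` of the adjoint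
DAE system is a linear isomorphism of `ℝᵐ × ℝᵐ` at every `(u₀, l₀)`. -/
theorem adjoint_DAE_index_one {n m : ℕ}
    (f : Euc n × Euc m → Euc n) (φ : Euc n × Euc m → Euc m)
    (hf : ContDiff ℝ 2 f) (hφ : ContDiff ℝ 2 φ)
    (q₀ p₀ : Euc n) (u₀ : Euc m)
    (hinv : Function.Bijective (Du φ q₀ u₀)) :
    ∀ l₀ : Euc m,
      Function.Bijective
        (fderiv ℝ (fun w : Euc m × Euc m =>
          ((φ (q₀, w.1), DuT f q₀ w.1 p₀ + DuT φ q₀ w.1 w.2) : Euc m × Euc m))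
          (u₀, l₀)) := by
  intro l₀
  have hφ_slice : DifferentiableAt ℝ (fun u : Euc m => φ (q₀, u)) u₀ :=
    (hφ.comp (contDiff_const.prodMk contDiff_id)).differentiable two_ne_zero u₀
  rw [fderiv_prodMk_add_clm_apply hφ_slice
    ((differentiable_DuT hf q₀ u₀).clm_apply (differentiableAt_const p₀))
    (differentiable_DuT hφ q₀ u₀) l₀]
  exact hinv.prod_lowerTriangular ((ContinuousLinearMap.bijective_adjoint_iff _).2 hinv) _

end
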